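/- For every fixed ℓ ≥ 1 there exists c > 0 such that ∑_{n ≤ x, n odd} θ_ℓ(n) ≥ c x for all sufficiently large x (i.e. ∑_{n ≤ x, n odd} θ_ℓ(n) ≫ x), where θ_ℓ(n) = ∑_{k > h, h(2k−h) = n} (h/(2k−h))^{1/2}(1 − h/(2k−h))^{ℓ−1}. -/
import Mathlib


open Real

/-- `θ_ℓ(n) = ∑_{k>h, h(2k-h)=n} (h/(2k-h))^{1/2} (1 - h/(2k-h))^{ℓ-1}`,
the sum running over pairs of positive integers `(h,k)` with `k > h`. -/
noncomputable def theta (ℓ n : ℕ) : ℝ :=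
  ∑ p ∈ (Finset.Icc 1 n ×ˢ Finset.Icc 1 n).filter
      (fun p : ℕ × ℕ => p.1 < p.2 ∧ p.1 * (2 * p.2 - p.1) = n),
    ((p.1 : ℝ) / ((2 * p.2 - p.1 : ℕ) : ℝ)) ^ (1 / 2 : ℝ)
      * (1 - (p.1 : ℝ) / ((2 * p.2 - p.1 : ℕ) : ℝ)) ^ (ℓ - 1)

/-- the summand of `theta`. -/
noncomputable def fterm (ℓ : ℕ) (p : ℕ × ℕ) : ℝ :=
  ((p.1 : ℝ) / ((2 * p.2 - p.1 : ℕ) : ℝ)) ^ (1 / 2 : ℝ)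
    * (1 - (p.1 : ℝ) / ((2 * p.2 - p.1 : ℕ) : ℝ)) ^ (ℓ - 1)

/-- the index set of `theta`. -/
def pset (n : ℕ) : Finset (ℕ × ℕ) :=
  (Finset.Icc 1 n ×ˢ Finset.Icc 1 n).filter
      (fun p : ℕ × ℕ => p.1 < p.2 ∧ p.1 * (2 * p.2 - p.1) = n)

lemma theta_eq (ℓ n : ℕ) : theta ℓ n = ∑ p ∈ pset n, fterm ℓ p := rfl

def hval (T : ℕ) (q : ℕ × ℕ) : ℕ := 2 * (T + q.1) + 1

def kval (T : ℕ) (q : ℕ × ℕ) : ℕ := 2 * hval T q + q.2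

def gmap (T : ℕ) (q : ℕ × ℕ) : Σ _ : ℕ, ℕ × ℕ :=
  ⟨hval T q * (3 * hval T q + 2 * q.2), (hval T q, kval T q)⟩

lemma gmap_inj (T : ℕ) : Function.Injective (gmap T) := by
  intro a b hab
  have h2 := congrArg (fun σ : (Σ _ : ℕ, ℕ × ℕ) => σ.2) hab
  simp only [gmap, hval, kval, Prod.mk.injEq] at h2
  obtain ⟨e1, e2⟩ := h2
  have ha1 : a.1 = b.1 := by omega
  have ha2 : a.2 = b.2 := by omega
  exact Prod.ext ha1 ha2

lemma gmap_mem (T N : ℕ) (hTN : 400 * T ^ 2 ≤ N) (hT1 : 1 ≤ T) (q : ℕ × ℕ)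
    (hq : q ∈ Finset.Icc 1 T ×ˢ Finset.Icc 1 T) :
    gmap T q ∈ ((Finset.Icc 1 N).filter (fun n : ℕ => Odd n)).sigma pset := by
  rw [Finset.mem_product, Finset.mem_Icc, Finset.mem_Icc] at hq
  obtain ⟨⟨ht1, htT⟩, ⟨hj1, hjT⟩⟩ := hq
  obtain ⟨t, j⟩ := q
  simp only at ht1 htT hj1 hjT
  have hg : gmap T (t, j) = ⟨(2 * (T + t) + 1) * (3 * (2 * (T + t) + 1) + 2 * j),
      (2 * (T + t) + 1, 2 * (2 * (T + t) + 1) + j)⟩ := rfl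
  rw [hg]
  have hn1 : 1 ≤ (2 * (T + t) + 1) * (3 * (2 * (T + t) + 1) + 2 * j) :=
    Nat.mul_pos (by omega) (by omega)
  have hnN : (2 * (T + t) + 1) * (3 * (2 * (T + t) + 1) + 2 * j) ≤ N := by
    have key : (2 * (T + t) + 1) * (3 * (2 * (T + t) + 1) + 2 * j) ≤ 400 * T ^ 2 := by
      nlinarith
    omega
  have hodd : Odd ((2 * (T + t) + 1) * (3 * (2 * (T + t) + 1) + 2 * j)) :=
    (Nat.odd_mul).mpr ⟨⟨T + t, by ring⟩, ⟨3 * (T + t) + 1 + j, by ring⟩⟩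
  have hk : 2 * (2 * (T + t) + 1) + j ≤ (2 * (T + t) + 1) * (3 * (2 * (T + t) + 1) + 2 * j) :=
    le_trans (by omega)
      (Nat.mul_le_mul_left (2 * (T + t) + 1) (by omega : 3 ≤ 3 * (2 * (T + t) + 1) + 2 * j))
  simp only [Finset.mem_sigma, Finset.mem_filter, Finset.mem_Icc, Finset.mem_product, pset]
  refine ⟨⟨⟨hn1, hnN⟩, hodd⟩, ⟨⟨by omega, by omega⟩, ⟨by omega, hk⟩⟩, by omega, ?_⟩
  have heq : 2 * (2 * (2 * (T + t) + 1) + j) - (2 * (T + t) + 1)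
      = 3 * (2 * (T + t) + 1) + 2 * j := by omega
  rw [heq]

lemma fterm_ge (ℓ T : ℕ) (hℓ : 1 ≤ ℓ) (q : ℕ × ℕ)
    (hq : q ∈ Finset.Icc 1 T ×ˢ Finset.Icc 1 T) :
    (1 / 2 : ℝ) * (2 / 3) ^ (ℓ - 1) ≤ fterm ℓ (gmap T q).2 := by
  rw [Finset.mem_product, Finset.mem_Icc, Finset.mem_Icc] at hq
  obtain ⟨⟨ht1, htT⟩, ⟨hj1, hjT⟩⟩ := hq
  obtain ⟨t, j⟩ := q
  simp only at ht1 htT hj1 hjT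
  have hsub : 2 * (2 * (2 * (T + t) + 1) + j) - (2 * (T + t) + 1)
      = 3 * (2 * (T + t) + 1) + 2 * j := by omega
  have hfe : fterm ℓ (gmap T (t, j)).2
      = (((2 * (T + t) + 1 : ℕ) : ℝ) / ((3 * (2 * (T + t) + 1) + 2 * j : ℕ) : ℝ)) ^ (1 / 2 : ℝ)
        * (1 - ((2 * (T + t) + 1 : ℕ) : ℝ) / ((3 * (2 * (T + t) + 1) + 2 * j : ℕ) : ℝ)) ^ (ℓ - 1) := by
    simp only [fterm, gmap, hval, kval, hsub]
  rw [hfe]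
  set h : ℕ := 2 * (T + t) + 1 with hhdef
  set m : ℕ := 3 * (2 * (T + t) + 1) + 2 * j with hmdef
  have hm4 : m ≤ 4 * h := by omega
  have hm3 : 3 * h ≤ m := by omega
  have hh1 : 1 ≤ h := by omega
  have hm0 : (0 : ℝ) < (m : ℝ) := by
    have : 0 < m := by omega
    exact_mod_cast this
  have hhR : (1 : ℝ) ≤ (h : ℝ) := by exact_mod_cast hh1
  have hm4R : (m : ℝ) ≤ 4 * (h : ℝ) := by exact_mod_cast hm4
  have hm3R : 3 * (h : ℝ) ≤ (m : ℝ) := by exact_mod_cast hm3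
  have h14 : (1 / 4 : ℝ) ≤ (h : ℝ) / (m : ℝ) := by
    rw [le_div_iff₀ hm0]; linarith
  have h13 : (h : ℝ) / (m : ℝ) ≤ 1 / 3 := by
    rw [div_le_iff₀ hm0]; linarith
  have h12 : ((1 : ℝ) / 4) ^ ((1 : ℝ) / 2) = 1 / 2 := by
    rw [show (1 / 4 : ℝ) = (1 / 2) ^ (2 : ℕ) by norm_num,
      ← Real.rpow_natCast (1 / 2 : ℝ) 2,
      ← Real.rpow_mul (by norm_num : (0 : ℝ) ≤ 1 / 2),
      show ((2 : ℕ) : ℝ) * (1 / 2) = 1 by norm_num, Real.rpow_one]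
  have hfac1 : (1 / 2 : ℝ) ≤ ((h : ℝ) / (m : ℝ)) ^ (1 / 2 : ℝ) :=
    calc (1 / 2 : ℝ) = ((1 : ℝ) / 4) ^ ((1 : ℝ) / 2) := h12.symm
      _ ≤ ((h : ℝ) / (m : ℝ)) ^ ((1 : ℝ) / 2) :=
          Real.rpow_le_rpow (by norm_num) h14 (by norm_num)
  have hfac2 : ((2 : ℝ) / 3) ^ (ℓ - 1) ≤ (1 - (h : ℝ) / (m : ℝ)) ^ (ℓ - 1) :=
    pow_le_pow_left₀ (show (0:ℝ) ≤ 2/3 by norm_num) (by linarith) _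
  have h1 : (0 : ℝ) ≤ (2 / 3 : ℝ) ^ (ℓ - 1) := by positivity
  have h2 : (0 : ℝ) ≤ ((h : ℝ) / (m : ℝ)) ^ (1 / 2 : ℝ) :=
    Real.rpow_nonneg (by positivity) _
  exact mul_le_mul hfac1 hfac2 h1 h2

lemma fterm_nonneg (ℓ : ℕ) (σ : Σ _ : ℕ, ℕ × ℕ)
    (hσ : σ.2 ∈ pset σ.1) : 0 ≤ fterm ℓ σ.2 := by
  obtain ⟨n, p⟩ := σ
  simp only [pset, Finset.mem_filter, Finset.mem_product, Finset.mem_Icc] at hσ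
  obtain ⟨⟨⟨hp1, _⟩, _⟩, hlt, _⟩ := hσ
  have hm : p.1 + 2 ≤ 2 * p.2 - p.1 := by omega
  have hm0 : (0 : ℝ) < ((2 * p.2 - p.1 : ℕ) : ℝ) := by
    have : 0 < 2 * p.2 - p.1 := by omega
    exact_mod_cast this
  have hle : (p.1 : ℝ) ≤ ((2 * p.2 - p.1 : ℕ) : ℝ) := by
    exact_mod_cast (by omega : p.1 ≤ 2 * p.2 - p.1)
  have hr1 : (p.1 : ℝ) / ((2 * p.2 - p.1 : ℕ) : ℝ) ≤ 1 := by
    rw [div_le_one hm0]; exact hle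
  apply mul_nonneg
  · exact Real.rpow_nonneg (by positivity) _
  · exact pow_nonneg (by linarith) _

theorem stmt19 (ℓ : ℕ) (hℓ : 1 ≤ ℓ) :
    ∃ c > (0 : ℝ), ∃ x₀ : ℝ, ∀ x : ℝ, x₀ ≤ x →
      c * x ≤ ∑ n ∈ (Finset.Icc 1 ⌊x⌋₊).filter (fun n : ℕ => Odd n), theta ℓ n := by
  classical
  set c₀ : ℝ := (1 / 2) * (2 / 3) ^ (ℓ - 1) with hc₀def
  have hc₀ : 0 < c₀ := by positivity
  refine ⟨c₀ / 1600, by positivity, 10 ^ 6, fun x hx => ?_⟩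
  have hx0 : (0 : ℝ) ≤ x := by norm_num at hx ⊢; linarith
  have hsq : (40 : ℝ) ≤ Real.sqrt x := by
    nlinarith [Real.sq_sqrt hx0, Real.sqrt_nonneg x]
  set N := ⌊x⌋₊ with hN
  set T := ⌊Real.sqrt x⌋₊ / 20 with hT
  have hfl : (⌊Real.sqrt x⌋₊ : ℝ) ≤ Real.sqrt x := Nat.floor_le (Real.sqrt_nonneg x)
  have hfl2 : Real.sqrt x < (⌊Real.sqrt x⌋₊ : ℝ) + 1 := Nat.lt_floor_add_one _
  have h20T : 20 * T ≤ ⌊Real.sqrt x⌋₊ := by omega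
  have h20TR : (20 * T : ℝ) ≤ Real.sqrt x := by
    calc (20 * T : ℝ) = ((20 * T : ℕ) : ℝ) := by push_cast; ring
      _ ≤ (⌊Real.sqrt x⌋₊ : ℝ) := by exact_mod_cast h20T
      _ ≤ Real.sqrt x := hfl
  have hT1 : 1 ≤ T := by
    have : 40 ≤ ⌊Real.sqrt x⌋₊ := by
      have := Nat.le_floor (α := ℝ) (n := 40) (by exact_mod_cast hsq)
      exact this
    omega
  have hTx : Real.sqrt x / 40 ≤ (T : ℝ) := by
    have h19 : (⌊Real.sqrt x⌋₊ : ℝ) - 19 ≤ (20 * T : ℝ) := by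
      have : ⌊Real.sqrt x⌋₊ ≤ 20 * T + 19 := by omega
      have := (Nat.cast_le (α := ℝ)).mpr this
      push_cast at this ⊢
      linarith
    linarith
  have hTN : 400 * T ^ 2 ≤ N := by
    apply Nat.le_floor
    push_cast
    nlinarith [h20TR, Real.sq_sqrt hx0]
  set I : Finset (ℕ × ℕ) := Finset.Icc 1 T ×ˢ Finset.Icc 1 T with hI
  have hcard : I.card = T * T := by
    simp [hI, Nat.card_Icc]
  calc c₀ / 1600 * x
      ≤ c₀ * (T : ℝ) ^ 2 := by
        have hxle : x ≤ 1600 * (T : ℝ) ^ 2 := by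
          nlinarith [hTx, Real.sq_sqrt hx0, Real.sqrt_nonneg x]
        calc c₀ / 1600 * x ≤ c₀ / 1600 * (1600 * (T : ℝ) ^ 2) := by
              apply mul_le_mul_of_nonneg_left hxle (by positivity)
          _ = c₀ * (T : ℝ) ^ 2 := by ring
    _ = ∑ _q ∈ I, c₀ := by
        rw [Finset.sum_const, hcard, nsmul_eq_mul]
        push_cast
        ring
    _ ≤ ∑ q ∈ I, fterm ℓ (gmap T q).2 :=
        Finset.sum_le_sum (fun q hq => fterm_ge ℓ T hℓ q hq)
    _ = ∑ σ ∈ I.image (gmap T), fterm ℓ σ.2 := by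
        rw [Finset.sum_image (fun a _ b _ hab => gmap_inj T hab)]
    _ ≤ ∑ σ ∈ ((Finset.Icc 1 N).filter (fun n : ℕ => Odd n)).sigma pset, fterm ℓ σ.2 := by
        apply Finset.sum_le_sum_of_subset_of_nonneg
        · intro σ hσ
          obtain ⟨q, hq, rfl⟩ := Finset.mem_image.mp hσ
          exact gmap_mem T N hTN hT1 q hq
        · intro σ hσ _
          exact fterm_nonneg ℓ σ (Finset.mem_sigma.mp hσ).2
    _ = ∑ n ∈ (Finset.Icc 1 N).filter (fun n : ℕ => Odd n), theta ℓ n := by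
        rw [Finset.sum_sigma]
        exact Finset.sum_congr rfl (fun n _ => (theta_eq ℓ n).symm)
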